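/- Let p be a prime number and let M be an additive commutative monoid on which the multiplication-by-p map x ↦ p • x is bijective. Then the monoid algebra 𝔽_p[M] (Mathlib: AddMonoidAlgebra (ZMod p) M) is a perfect ring of characteristic p, i.e., its Frobenius endomorphism x ↦ x^p is bijective. (This is the assertion, used in the paper's lemma on p-complete formal étaleness of R[M[1/p]], that 𝔽_p[M] is a perfect 𝔽_p-algebra when M has all p-th roots; bijectivity follows since Frobenius sends a sum Σ aᵢ·x^{mᵢ} to Σ aᵢ·x^{p·mᵢ} and p• is bijective on M.) -/

import Mathlib

/-- If `M` is an additive commutative monoid on which multiplication by a prime `p` is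
bijective, then the monoid algebra `𝔽_p[M]` is a perfect ring of characteristic `p`:
it has characteristic `p` and its Frobenius endomorphism `x ↦ x ^ p` is bijective. -/
theorem addMonoidAlgebra_zmod_perfect
    (p : ℕ) [Fact p.Prime] {M : Type*} [AddCommMonoid M]
    (h : Function.Bijective (fun x : M => p • x)) :
    CharP (AddMonoidAlgebra (ZMod p) M) p ∧
      Function.Bijective (fun x : AddMonoidAlgebra (ZMod p) M => x ^ p) := by
  have hinj : Function.Injective (algebraMap (ZMod p) (AddMonoidAlgebra (ZMod p) M)) := by
    intro a b hab
    simpa using AddMonoidAlgebra.single_right_injective (m := (0 : M)) hab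
  have hchar : CharP (AddMonoidAlgebra (ZMod p) M) p :=
    charP_of_injective_algebraMap hinj p
  refine ⟨hchar, ?_⟩
  -- the Frobenius as a ring hom
  have hp : p ≠ 1 := (Fact.out : p.Prime).ne_one
  let e : M ≃+ M := AddEquiv.ofBijective (DistribMulAction.toAddMonoidHom M p) h
  let φ : AddMonoidAlgebra (ZMod p) M →+* AddMonoidAlgebra (ZMod p) M :=
    AddMonoidAlgebra.mapDomainRingHom (ZMod p) (e : M →+ M)
  have key : frobenius (AddMonoidAlgebra (ZMod p) M) p = φ := by
    apply AddMonoidAlgebra.ringHom_ext <;> intro a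
    · rw [frobenius_def, AddMonoidAlgebra.single_pow, ZMod.pow_card, smul_zero,
        show φ (AddMonoidAlgebra.single 0 a) =
          AddMonoidAlgebra.mapDomain (⇑e) (AddMonoidAlgebra.single 0 a) from rfl,
        AddMonoidAlgebra.mapDomain_single, map_zero]
    · rw [frobenius_def, AddMonoidAlgebra.single_pow, one_pow,
        show φ (AddMonoidAlgebra.single a 1) =
          AddMonoidAlgebra.mapDomain (⇑e) (AddMonoidAlgebra.single a 1) from rfl,
        AddMonoidAlgebra.mapDomain_single]
      rfl
  have hφ : Function.Bijective φ := by
    have heq : ⇑φ = ⇑(AddMonoidAlgebra.mapDomainRingEquiv (ZMod p) e) := by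
      funext x
      rfl
    rw [heq]
    exact (AddMonoidAlgebra.mapDomainRingEquiv (ZMod p) e).bijective
  have : (fun x : AddMonoidAlgebra (ZMod p) M => x ^ p) =
      ⇑(frobenius (AddMonoidAlgebra (ZMod p) M) p) := rfl
  rw [this, key]
  exact hφ
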